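/- Let 𝒳 = span{X_1, …, X_k} ⊂ 𝔽^{n×n} (𝔽 = ℝ or ℂ) be a k-dimensional subspace and let X_* ∈ 𝒳 be a spectral approximation of Y ∈ 𝔽^{n×n} \ 𝒳. Define A_i = (Y − X_*)ᴴ X_i for i = 1, …, k and A_Y = (Y − X_*)ᴴ Y. If the set 𝓕(A_Y, A_1, …, A_k) is convex, then max_{‖v‖₂=1} min_{X∈𝒳} ‖(Y − X)v‖₂ = min_{X∈𝒳} ‖Y − X‖₂. -/

import Mathlib

open Matrix

variable {𝕜 : Type*} [RCLike 𝕜]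

/-- The spectral norm (matrix 2-norm): the supremum of `‖A v‖₂` over unit Euclidean
norm vectors `v`. -/
noncomputable def specNorm {m : Type*} [Fintype m] [DecidableEq m]
    (A : Matrix m m 𝕜) : ℝ :=
  sSup {r : ℝ | ∃ v : EuclideanSpace 𝕜 m, ‖v‖ = 1 ∧ r = ‖Matrix.toEuclideanLin A v‖}

/-- `Xs` is a spectral (best) approximation of `Y` from the subspace `𝒳`. -/
def IsSpectralApprox {m : Type*} [Fintype m] [DecidableEq m]
    (𝒳 : Submodule 𝕜 (Matrix m m 𝕜)) (Y Xs : Matrix m m 𝕜) : Prop :=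
  Xs ∈ 𝒳 ∧ ∀ X ∈ 𝒳, specNorm (Y - Xs) ≤ specNorm (Y - X)

/-- The span of the maximal right singular vectors of `M`. -/
noncomputable def maxRSV {m : Type*} [Fintype m] [DecidableEq m]
    (M : Matrix m m 𝕜) : Submodule 𝕜 (EuclideanSpace 𝕜 m) :=
  Submodule.span 𝕜 {v : EuclideanSpace 𝕜 m | ‖v‖ = 1 ∧ ‖Matrix.toEuclideanLin M v‖ = specNorm M}

/-- The `k`-dimensional field of the `k` matrices `A 0, …, A (k-1)` restricted to
the subspace `S`. -/
def kField {m : Type*} [Fintype m] [DecidableEq m] {k : ℕ}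
    (A : Fin k → Matrix m m 𝕜) (S : Submodule 𝕜 (EuclideanSpace 𝕜 m)) : Set (Fin k → 𝕜) :=
  {w | ∃ v : EuclideanSpace 𝕜 m, v ∈ S ∧ ‖v‖ = 1 ∧
     w = fun i => (inner 𝕜 v (Matrix.toEuclideanLin (A i) v) : 𝕜)}

/-- min-max value -/
noncomputable def minMaxVal {m : Type*} [Fintype m] [DecidableEq m]
    (𝒳 : Submodule 𝕜 (Matrix m m 𝕜)) (Y : Matrix m m 𝕜) : ℝ :=
  sInf {r : ℝ | ∃ X ∈ 𝒳, r = specNorm (Y - X)}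

/-- max-min value -/
noncomputable def maxMinVal {m : Type*} [Fintype m] [DecidableEq m]
    (𝒳 : Submodule 𝕜 (Matrix m m 𝕜)) (Y : Matrix m m 𝕜) : ℝ :=
  sSup {r : ℝ | ∃ v : EuclideanSpace 𝕜 m, ‖v‖ = 1 ∧
    r = sInf {s : ℝ | ∃ X ∈ 𝒳, s = ‖Matrix.toEuclideanLin (Y - X) v‖}}

/-- dual norm of a linear functional w.r.t. the spectral norm -/
noncomputable def dualNorm {m : Type*} [Fintype m] [DecidableEq m]
    (f : Matrix m m 𝕜 →ₗ[𝕜] 𝕜) : ℝ :=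
  sSup {r : ℝ | ∃ A : Matrix m m 𝕜, specNorm A = 1 ∧ r = ‖f A‖}

/-- the rank one matrix `u vᴴ` -/
def outer {m : Type*} (u v : EuclideanSpace 𝕜 m) : Matrix m m 𝕜 :=
  Matrix.of fun i j => u i * star (v j)

/-- nuclear (Schatten 1) norm: the sum of the singular values -/
noncomputable def nuclearNorm {m : Type*} [Fintype m] [DecidableEq m]
    (F : Matrix m m 𝕜) : ℝ :=
  ∑ i, Real.sqrt ((Matrix.isHermitian_conjTranspose_mul_self F).eigenvalues i)

/-! Let `σ = ‖Y - X_*‖₂`. The point `(σ², 0, …, 0)` lies in the field: otherwise, the field being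
convex and compact, a real functional separates it, and on the field such a functional reads
`v ↦ re c ‖(Y - X_*) v‖² + re ⟪(Y - X_*) v, W v⟫` for some scalar `c` and some `W ∈ 𝒳`. Optimality
of `X_*` against the perturbations `X_* - t W`, `t → 0⁺`, produces a maximal right singular vector
`v` of `Y - X_*` with `re ⟪(Y - X_*) v, W v⟫ ≥ 0`, at which the functional is at least its value at
the point. A unit vector `v` realising the point satisfies `⟪(Y - X_*) v, (Y - X) v⟫ = σ²` for every
`X ∈ 𝒳`, so Cauchy–Schwarz gives `‖(Y - X) v‖ ≥ σ`: this `v` attains the min-max value `σ`. -/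

open Filter Topology RCLike
open scoped InnerProductSpace

section OperatorNorm

variable {E F : Type*} [NormedAddCommGroup E] [NormedSpace 𝕜 E] [ProperSpace E] [Nontrivial E]
  [NormedAddCommGroup F] [InnerProductSpace 𝕜 F]

theorem ContinuousLinearMap.exists_norm_eq_one_and_norm_apply_eq_opNorm (T : E →L[𝕜] F) :
    ∃ v, ‖v‖ = 1 ∧ ‖T v‖ = ‖T‖ := by
  obtain ⟨v, hv, hmax⟩ := (isCompact_sphere (0 : E) 1).exists_sSup_image_eq
    (Set.nonempty_coe_sort.1 (NormedSpace.sphere_nonempty_rclike 𝕜 zero_le_one))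
    T.continuous.norm.continuousOn
  exact ⟨v, mem_sphere_zero_iff_norm.1 hv, hmax ▸ T.sSup_sphere_eq_norm⟩

theorem ContinuousLinearMap.exists_norm_apply_eq_opNorm_and_re_inner_nonneg (T W : E →L[𝕜] F)
    (hT : ∀ t : ℝ, 0 < t → ‖T‖ ≤ ‖T + (t : 𝕜) • W‖) :
    ∃ v, ‖v‖ = 1 ∧ ‖T v‖ = ‖T‖ ∧ 0 ≤ re ⟪T v, W v⟫_𝕜 := by
  -- `v j` norms `T + t j • W`; expanding `‖T‖² ≤ ‖(T + t j • W) v j‖²` gives `hre`, and both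
  -- inequalities survive the limit `t j → 0` along a convergent subsequence of `v j`.
  set t : ℕ → ℝ := fun j => 1 / (j + 1)
  have ht : ∀ j, 0 < t j := fun j => by positivity
  choose v hv1 hv using fun j => (T + (t j : 𝕜) • W).exists_norm_eq_one_and_norm_apply_eq_opNorm
  have hnorm : ∀ j, ‖T‖ ≤ ‖T (v j) + (t j : 𝕜) • W (v j)‖ := fun j => by
    simpa [← hv j] using hT (t j) (ht j)
  have hre : ∀ j, 0 ≤ 2 * re ⟪T (v j), W (v j)⟫_𝕜 + t j * ‖W (v j)‖ ^ 2 := by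
    intro j
    have hexp : ‖T (v j) + (t j : 𝕜) • W (v j)‖ ^ 2
        = ‖T (v j)‖ ^ 2 + t j * (2 * re ⟪T (v j), W (v j)⟫_𝕜 + t j * ‖W (v j)‖ ^ 2) := by
      rw [norm_add_sq (𝕜 := 𝕜), inner_smul_right, re_ofReal_mul, norm_smul, norm_ofReal,
        abs_of_pos (ht j)]
      ring
    have hTv : ‖T (v j)‖ ≤ ‖T‖ := by simpa [hv1 j] using T.le_opNorm (v j)
    have := pow_le_pow_left₀ (norm_nonneg T) (hnorm j) 2
    nlinarith [ht j, pow_le_pow_left₀ (norm_nonneg _) hTv 2]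
  obtain ⟨a, ha, φ, hφ, hlim⟩ := (isCompact_sphere (0 : E) 1).tendsto_subseq
    (fun j => mem_sphere_zero_iff_norm.2 (hv1 j))
  have hpair : Tendsto (fun j => (t (φ j), v (φ j))) atTop (𝓝 (0, a)) :=
    (tendsto_one_div_add_atTop_nhds_zero_nat.comp hφ.tendsto_atTop).prodMk_nhds hlim
  have hTa : ‖T‖ ≤ ‖T a‖ := by
    simpa using (isClosed_le continuous_const (by fun_prop) :
      IsClosed {p : ℝ × E | ‖T‖ ≤ ‖T p.2 + (p.1 : 𝕜) • W p.2‖}).mem_of_tendsto hpair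
      (Eventually.of_forall fun j => hnorm (φ j))
  have hWa : 0 ≤ 2 * re ⟪T a, W a⟫_𝕜 := by
    simpa using (isClosed_le continuous_const (by fun_prop) :
      IsClosed {p : ℝ × E | 0 ≤ 2 * re ⟪T p.2, W p.2⟫_𝕜 + p.1 * ‖W p.2‖ ^ 2}).mem_of_tendsto
      hpair (Eventually.of_forall fun j => hre (φ j))
  have ha1 : ‖a‖ = 1 := mem_sphere_zero_iff_norm.1 ha
  refine ⟨a, ha1, le_antisymm ?_ hTa, by linarith⟩
  simpa [ha1] using T.le_opNorm a

end OperatorNorm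

section SpectralApproximation

variable {m : Type*} [Fintype m] [DecidableEq m]

theorem specNorm_eq_norm_toEuclideanCLM (A : Matrix m m 𝕜) :
    specNorm A = ‖toEuclideanCLM (𝕜 := 𝕜) A‖ := by
  rw [specNorm, ← ContinuousLinearMap.sSup_sphere_eq_norm]
  congr 1
  ext r
  simp only [Set.mem_ofPred_eq, Set.mem_image, mem_sphere_zero_iff_norm, eq_comm (a := r),
    ← coe_toEuclideanCLM_eq_toEuclideanLin, ContinuousLinearMap.coe_coe]

theorem norm_toEuclideanLin_apply_le_specNorm (A : Matrix m m 𝕜) {v : EuclideanSpace 𝕜 m}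
    (hv : ‖v‖ = 1) : ‖toEuclideanLin A v‖ ≤ specNorm A := by
  have := (toEuclideanCLM (𝕜 := 𝕜) A).le_opNorm v
  rwa [hv, mul_one, ← specNorm_eq_norm_toEuclideanCLM] at this

theorem inner_toEuclideanLin_conjTranspose_mul (B C : Matrix m m 𝕜) (v : EuclideanSpace 𝕜 m) :
    ⟪v, toEuclideanLin (Bᴴ * C) v⟫_𝕜 = ⟪toEuclideanLin B v, toEuclideanLin C v⟫_𝕜 := by
  change ⟪v, toEuclideanCLM (𝕜 := 𝕜) (Bᴴ * C) v⟫_𝕜 =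
    ⟪toEuclideanCLM (𝕜 := 𝕜) B v, toEuclideanCLM (𝕜 := 𝕜) C v⟫_𝕜
  rw [map_mul, ← star_eq_conjTranspose, map_star, mul_apply_eq_comp,
    ContinuousLinearMap.star_eq_adjoint, ContinuousLinearMap.adjoint_inner_right]

theorem IsSpectralApprox.exists_re_inner_nonneg [Nonempty m] {𝒳 : Submodule 𝕜 (Matrix m m 𝕜)}
    {Y Xs W : Matrix m m 𝕜} (h : IsSpectralApprox 𝒳 Y Xs) (hW : W ∈ 𝒳) :
    ∃ v : EuclideanSpace 𝕜 m, ‖v‖ = 1 ∧ ‖toEuclideanLin (Y - Xs) v‖ = specNorm (Y - Xs) ∧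
      0 ≤ re ⟪toEuclideanLin (Y - Xs) v, toEuclideanLin W v⟫_𝕜 := by
  simp only [specNorm_eq_norm_toEuclideanCLM]
  refine (toEuclideanCLM (𝕜 := 𝕜) (Y - Xs)).exists_norm_apply_eq_opNorm_and_re_inner_nonneg
    (toEuclideanCLM (𝕜 := 𝕜) W) fun t _ => ?_
  have hmem : Xs - (t : 𝕜) • W ∈ 𝒳 := 𝒳.sub_mem h.1 (𝒳.smul_mem _ hW)
  have hshift : Y - (Xs - (t : 𝕜) • W) = (Y - Xs) + (t : 𝕜) • W := by abel
  have hopt := h.2 _ hmem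
  rw [hshift] at hopt
  rwa [specNorm_eq_norm_toEuclideanCLM, specNorm_eq_norm_toEuclideanCLM, map_add, map_smul] at hopt

theorem isCompact_kField_top {k : ℕ} (A : Fin k → Matrix m m 𝕜) : IsCompact (kField A ⊤) := by
  have hrange : kField A ⊤ =
      (fun v : EuclideanSpace 𝕜 m => fun i => ⟪v, toEuclideanLin (A i) v⟫_𝕜) '' Metric.sphere 0 1 := by
    ext w
    simp [kField, eq_comm]
  rw [hrange]
  exact (isCompact_sphere 0 1).image (continuous_pi fun i =>
    continuous_id.inner (LinearMap.continuous_of_finiteDimensional _))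

theorem ContinuousLinearMap.apply_inner_toEuclideanLin {ι : Type*} [Fintype ι] [DecidableEq ι]
    (g : (ι → 𝕜) →L[𝕜] 𝕜) (A : ι → Matrix m m 𝕜) (v : EuclideanSpace 𝕜 m) :
    g (fun i => ⟪v, toEuclideanLin (A i) v⟫_𝕜)
      = ⟪v, toEuclideanLin (∑ i, g (Pi.single i 1) • A i) v⟫_𝕜 := by
  conv_lhs => rw [← Finset.univ_sum_single (fun i => ⟪v, toEuclideanLin (A i) v⟫_𝕜)]
  simp only [map_sum, map_smul, LinearMap.coe_sum, Finset.sum_apply, LinearMap.smul_apply,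
    inner_sum, inner_smul_right]
  refine Finset.sum_congr rfl fun i _ => ?_
  have hsingle : ∀ a : 𝕜, Pi.single i a = a • Pi.single i (1 : 𝕜) := fun a => by
    rw [← Pi.single_smul', smul_eq_mul, mul_one]
  rw [hsingle, map_smul, smul_eq_mul, mul_comm]

theorem ContinuousLinearMap.apply_inner_toEuclideanLin_cons {k : ℕ}
    (g : (Fin (k + 1) → 𝕜) →L[𝕜] 𝕜) (M Y : Matrix m m 𝕜) (X : Fin k → Matrix m m 𝕜)
    (v : EuclideanSpace 𝕜 m) :
    g (fun i => ⟪v, toEuclideanLin ((Fin.cons (Mᴴ * Y) fun j => Mᴴ * X j : Fin (k + 1) → _) i) v⟫_𝕜)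
      = ⟪toEuclideanLin M v,
          toEuclideanLin (g (Pi.single 0 1) • Y + ∑ i, g (Pi.single i.succ 1) • X i) v⟫_𝕜 := by
  rw [g.apply_inner_toEuclideanLin, Fin.sum_univ_succ]
  simp only [Fin.cons_zero, Fin.cons_succ, ← Matrix.mul_smul, ← Matrix.mul_sum, ← Matrix.mul_add,
    inner_toEuclideanLin_conjTranspose_mul]

theorem IsSpectralApprox.single_specNorm_sq_mem_kField [Nonempty m] {k : ℕ}
    {X : Fin k → Matrix m m 𝕜} {Y Xs : Matrix m m 𝕜}
    (h : IsSpectralApprox (Submodule.span 𝕜 (Set.range X)) Y Xs)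
    (hconv : Convex ℝ (kField (Fin.cons ((Y - Xs)ᴴ * Y) fun i => (Y - Xs)ᴴ * X i) ⊤)) :
    Pi.single 0 ((specNorm (Y - Xs) ^ 2 : ℝ) : 𝕜)
      ∈ kField (Fin.cons ((Y - Xs)ᴴ * Y) fun i => (Y - Xs)ᴴ * X i) ⊤ := by
  by_contra hp
  obtain ⟨g, u, hgC, hgp⟩ :=
    RCLike.geometric_hahn_banach_closed_point (𝕜 := 𝕜) hconv (isCompact_kField_top _).isClosed hp
  set c := g (Pi.single 0 1)
  set W := c • Xs + ∑ i, g (Pi.single i.succ 1) • X i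
  have hW : W ∈ Submodule.span 𝕜 (Set.range X) :=
    add_mem (Submodule.smul_mem _ _ h.1) (Submodule.sum_mem _ fun i _ =>
      Submodule.smul_mem _ _ (Submodule.subset_span ⟨i, rfl⟩))
  obtain ⟨v, hv, hvM, hvW⟩ := h.exists_re_inner_nonneg hW
  have hgv := hgC _ ⟨v, trivial, hv, rfl⟩
  have hsplit : c • Y + ∑ i, g (Pi.single i.succ 1) • X i = c • (Y - Xs) + W := by
    simp only [W, smul_sub]; abel
  rw [g.apply_inner_toEuclideanLin_cons, hsplit, map_add, map_smul, LinearMap.add_apply,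
    LinearMap.smul_apply, inner_add_right, inner_smul_right, inner_self_eq_norm_sq_to_K, hvM,
    map_add, ← RCLike.ofReal_pow, re_mul_ofReal] at hgv
  rw [← mul_one ((specNorm (Y - Xs) ^ 2 : ℝ) : 𝕜), ← smul_eq_mul, Pi.single_smul', map_smul,
    smul_eq_mul, mul_comm, re_mul_ofReal] at hgp
  linarith

theorem inner_toEuclideanLin_eq_zero_of_mem_span {ι : Type*} {X : ι → Matrix m m 𝕜}
    {w v : EuclideanSpace 𝕜 m} (hX : ∀ i, ⟪w, toEuclideanLin (X i) v⟫_𝕜 = 0) {Z : Matrix m m 𝕜}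
    (hZ : Z ∈ Submodule.span 𝕜 (Set.range X)) : ⟪w, toEuclideanLin Z v⟫_𝕜 = 0 := by
  induction hZ using Submodule.span_induction with
  | mem _ hZ => obtain ⟨i, rfl⟩ := hZ; exact hX i
  | zero => simp
  | add _ _ _ _ h₁ h₂ => simp [inner_add_right, h₁, h₂]
  | smul _ _ _ h => simp [inner_smul_right, h]

theorem specNorm_le_norm_toEuclideanLin_apply {M Z : Matrix m m 𝕜} {v : EuclideanSpace 𝕜 m}
    (hv : ‖v‖ = 1) (h : ⟪toEuclideanLin M v, toEuclideanLin Z v⟫_𝕜 = ((specNorm M ^ 2 : ℝ) : 𝕜)) :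
    specNorm M ≤ ‖toEuclideanLin Z v‖ := by
  have hσ : specNorm M ^ 2 ≤ specNorm M * ‖toEuclideanLin Z v‖ :=
    calc specNorm M ^ 2 = re ⟪toEuclideanLin M v, toEuclideanLin Z v⟫_𝕜 := by rw [h, ofReal_re]
      _ ≤ ‖toEuclideanLin M v‖ * ‖toEuclideanLin Z v‖ := re_inner_le_norm _ _
      _ ≤ specNorm M * ‖toEuclideanLin Z v‖ := by
        gcongr; exact norm_toEuclideanLin_apply_le_specNorm M hv
  have hM : 0 ≤ specNorm M := (norm_nonneg _).trans (norm_toEuclideanLin_apply_le_specNorm M hv)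
  nlinarith [norm_nonneg (toEuclideanLin Z v)]

theorem IsSpectralApprox.minMaxVal_eq {𝒳 : Submodule 𝕜 (Matrix m m 𝕜)} {Y Xs : Matrix m m 𝕜}
    (h : IsSpectralApprox 𝒳 Y Xs) : minMaxVal 𝒳 Y = specNorm (Y - Xs) :=
  IsLeast.csInf_eq ⟨⟨Xs, h.1, rfl⟩, by rintro _ ⟨X, hX, rfl⟩; exact h.2 X hX⟩

theorem IsSpectralApprox.maxMinVal_eq {𝒳 : Submodule 𝕜 (Matrix m m 𝕜)} {Y Xs : Matrix m m 𝕜}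
    (h : IsSpectralApprox 𝒳 Y Xs) {v : EuclideanSpace 𝕜 m} (hv : ‖v‖ = 1)
    (hle : ∀ X ∈ 𝒳, specNorm (Y - Xs) ≤ ‖toEuclideanLin (Y - X) v‖) :
    maxMinVal 𝒳 Y = specNorm (Y - Xs) := by
  rw [maxMinVal]
  refine IsGreatest.csSup_eq ⟨⟨v, hv, ?_⟩, ?_⟩
  · symm
    refine IsLeast.csInf_eq ⟨⟨Xs, h.1, ?_⟩, ?_⟩
    · exact (le_antisymm (norm_toEuclideanLin_apply_le_specNorm _ hv) (hle Xs h.1)).symm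
    · rintro _ ⟨X, hX, rfl⟩; exact hle X hX
  · rintro _ ⟨w, hw, rfl⟩
    refine le_trans (csInf_le ⟨0, ?_⟩ ⟨Xs, h.1, rfl⟩) (norm_toEuclideanLin_apply_le_specNorm _ hw)
    rintro _ ⟨X, -, rfl⟩
    exact norm_nonneg _

end SpectralApproximation

theorem stmt15_general {n k : ℕ} (X : Fin k → Matrix (Fin n) (Fin n) 𝕜)
    (Y Xs : Matrix (Fin n) (Fin n) 𝕜)
    (hY : Y ∉ Submodule.span 𝕜 (Set.range X))
    (happrox : IsSpectralApprox (Submodule.span 𝕜 (Set.range X)) Y Xs)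
    (hconv : Convex ℝ (kField (Fin.cons ((Y - Xs)ᴴ * Y) (fun i => (Y - Xs)ᴴ * X i)) ⊤)) :
    maxMinVal (Submodule.span 𝕜 (Set.range X)) Y
      = minMaxVal (Submodule.span 𝕜 (Set.range X)) Y := by
  have : Nonempty (Fin n) := by
    refine Fin.pos_iff_nonempty.1 (Nat.pos_of_ne_zero ?_)
    rintro rfl
    exact hY (by simp [Subsingleton.elim Y 0])
  obtain ⟨v, -, hv, hpv⟩ := happrox.single_specNorm_sq_mem_kField hconv
  have hYv : ⟪toEuclideanLin (Y - Xs) v, toEuclideanLin Y v⟫_𝕜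
      = ((specNorm (Y - Xs) ^ 2 : ℝ) : 𝕜) := by
    simpa only [Pi.single_eq_same, Fin.cons_zero, inner_toEuclideanLin_conjTranspose_mul] using
      (congrFun hpv 0).symm
  have hXv : ∀ i, ⟪toEuclideanLin (Y - Xs) v, toEuclideanLin (X i) v⟫_𝕜 = 0 := fun i => by
    simpa only [Pi.single_eq_of_ne (Fin.succ_ne_zero i), Fin.cons_succ,
      inner_toEuclideanLin_conjTranspose_mul] using (congrFun hpv i.succ).symm
  rw [happrox.maxMinVal_eq hv, happrox.minMaxVal_eq]
  intro Z hZ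
  refine specNorm_le_norm_toEuclideanLin_apply hv ?_
  rw [map_sub toEuclideanLin Y Z, LinearMap.sub_apply, inner_sub_right, hYv,
    inner_toEuclideanLin_eq_zero_of_mem_span hXv hZ, sub_zero]

theorem stmt15 {n k : ℕ} (X : Fin k → Matrix (Fin n) (Fin n) 𝕜)
    (hdim : Module.finrank 𝕜 (Submodule.span 𝕜 (Set.range X)) = k)
    (Y Xs : Matrix (Fin n) (Fin n) 𝕜)
    (hY : Y ∉ Submodule.span 𝕜 (Set.range X))
    (happrox : IsSpectralApprox (Submodule.span 𝕜 (Set.range X)) Y Xs)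
    (hconv : Convex ℝ (kField (Fin.cons ((Y - Xs)ᴴ * Y) (fun i => (Y - Xs)ᴴ * X i)) ⊤)) :
    maxMinVal (Submodule.span 𝕜 (Set.range X)) Y
      = minMaxVal (Submodule.span 𝕜 (Set.range X)) Y :=
  stmt15_general X Y Xs hY happrox hconv
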